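/- Let u: ℤ² → ℝ be the discrete conformal factors of a locally univalent circle packing of the hexagonal lattice, and suppose inf_{m,n} (u_{m+1,n} − u_{m,n}) > −∞. Then there exist constants k1, k2 such that u_{m+1,n} − u_{m,n} = k1 and u_{m,n+1} − u_{m,n} = k2 for all m, n; equivalently, the radii satisfy r_{m,n} = r_{0,0} · e^{k1 m} · e^{k2 n}, so the packing is a regular hexagonal packing (k1 = k2 = 0) or a Doyle spiral. -/

import Mathlib

open Real

/-- Inner angle at the vertex of radius `a` in the triangle with side lengths
`a+b, a+c, b+c` formed by three mutually externally tangent circles. -/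
noncomputable def ang (a b c : ℝ) : ℝ :=
  Real.arccos (((a + b) ^ 2 + (a + c) ^ 2 - (b + c) ^ 2) / (2 * (a + b) * (a + c)))

/-- The circle packing angle-sum condition at vertex `(m,n)` of the hexagonal lattice
for radii `r`: the six inner angles at `(m,n)` sum to `2π`. -/
noncomputable def packingEq (r : ℤ × ℤ → ℝ) (m n : ℤ) : Prop :=
  ang (r (m, n)) (r (m + 1, n)) (r (m, n + 1)) +
  ang (r (m, n)) (r (m, n + 1)) (r (m - 1, n + 1)) +
  ang (r (m, n)) (r (m - 1, n + 1)) (r (m - 1, n)) +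
  ang (r (m, n)) (r (m - 1, n)) (r (m, n - 1)) +
  ang (r (m, n)) (r (m, n - 1)) (r (m + 1, n - 1)) +
  ang (r (m, n)) (r (m + 1, n - 1)) (r (m + 1, n)) = 2 * Real.pi

/-!
Write `u'` for the translate `w ↦ u (w + (1, 0))`, again a packing. Along the segment of
log-radii from `u` to `u'` the derivative of the angle at `a` in a triangle of tangent circles
with respect to `log b` is `inradius / (a + b)`, symmetric in `a, b`; integrating the angle sums
therefore makes `D₁u = u' - u` harmonic for symmetric conductances in `(0, 1]`. The hexagonal
lattice is recurrent: cutoffs built from harmonic numbers have energy `O(1 / log N)`. Hence the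
positive harmonic function `D₁u - c + 1`, for a lower bound `c`, is constant (Liouville). Once
`D₁u ≡ k₁` the radii grow geometrically along rows, and the angle sum at a vertex is strictly
increasing in its neighbours' radii, so comparison with the Doyle spiral through two consecutive
rows fixes the next row: `D₂u` is constant as well.
-/

noncomputable section

namespace CirclePacking

open Filter Topology

section Triangle

variable {a b c : ℝ}

def inradius (a b c : ℝ) : ℝ := √(a * b * c / (a + b + c))

lemma inradius_pos (ha : 0 < a) (hb : 0 < b) (hc : 0 < c) : 0 < inradius a b c := by
  unfold inradius; positivity

lemma inradius_sq (ha : 0 < a) (hb : 0 < b) (hc : 0 < c) :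
    inradius a b c ^ 2 = a * b * c / (a + b + c) :=
  Real.sq_sqrt (by positivity)

lemma inradius_rotate : inradius b c a = inradius a b c := by
  unfold inradius; ring_nf

lemma inradius_swap_left : inradius b a c = inradius a b c := by
  unfold inradius; ring_nf

lemma inradius_swap_right : inradius a c b = inradius a b c := by
  unfold inradius; ring_nf

lemma two_mul_inradius_le (ha : 0 < a) (hb : 0 < b) (hc : 0 < c) :
    2 * inradius a b c ≤ a + b := by
  have hr2 : inradius a b c ^ 2 ≤ a * b := by
    rw [inradius_sq ha hb hc, div_le_iff₀ (by positivity)]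
    nlinarith [mul_pos (mul_pos ha hb) (add_pos ha hb)]
  nlinarith [sq_nonneg (a - b)]

lemma inradius_lt_inradius {b' : ℝ} (ha : 0 < a) (hb : 0 < b) (hc : 0 < c) (h : b < b') :
    inradius a b c < inradius a b' c := by
  unfold inradius
  apply Real.sqrt_lt_sqrt (by positivity)
  rw [div_lt_div_iff₀ (by positivity) (by linarith)]
  nlinarith [mul_pos (mul_pos ha hc) (add_pos ha hc)]

lemma ang_comm : ang a c b = ang a b c := by
  unfold ang; ring_nf

lemma ang_mul {k : ℝ} (hk : k ≠ 0) : ang (k * a) (k * b) (k * c) = ang a b c := by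
  unfold ang
  congr 1
  rw [show ((k * a + k * b) ^ 2 + (k * a + k * c) ^ 2 - (k * b + k * c) ^ 2)
      = k ^ 2 * ((a + b) ^ 2 + (a + c) ^ 2 - (b + c) ^ 2) by ring,
    show 2 * (k * a + k * b) * (k * a + k * c) = k ^ 2 * (2 * (a + b) * (a + c)) by ring,
    mul_div_mul_left _ _ (pow_ne_zero 2 hk)]

lemma ang_exp_eq_ang_one (x y z : ℝ) :
    ang (exp x) (exp y) (exp z) = ang 1 (exp (y - x)) (exp (z - x)) := by
  rw [← ang_mul (exp_ne_zero x) (a := 1), mul_one, ← exp_add, ← exp_add, add_sub_cancel,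
    add_sub_cancel]

/-- The incircle touches the two sides at `a` at distance `a` from that vertex, so
`tan (α / 2) = inradius / a`. -/
lemma ang_eq_two_mul_arctan (ha : 0 < a) (hb : 0 < b) (hc : 0 < c) :
    ang a b c = 2 * arctan (inradius a b c / a) := by
  have hpos : 0 < 2 * arctan (inradius a b c / a) := by
    have := arctan_pos.2 (div_pos (inradius_pos ha hb hc) ha)
    positivity
  have hlt : 2 * arctan (inradius a b c / a) < π := by
    linarith [arctan_lt_pi_div_two (inradius a b c / a)]
  rw [← arccos_cos hpos.le hlt.le, ang]
  congr 1
  rw [cos_two_mul, cos_sq_arctan, div_pow, inradius_sq ha hb hc]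
  field_simp
  ring

lemma arctan_add_arctan_add_arctan {x y z : ℝ} (hx : 0 < x) (hy : 0 < y) (hz : 0 < z)
    (h : x * y + y * z + z * x = 1) : arctan x + arctan y + arctan z = π / 2 := by
  have hxy : x * y < 1 := by nlinarith [mul_pos hy hz, mul_pos hz hx]
  have hz' : z = ((x + y) / (1 - x * y))⁻¹ := by
    field_simp [sub_ne_zero.2 hxy.ne']
    linarith
  rw [arctan_add hxy, hz', arctan_inv_of_pos (by apply div_pos <;> linarith)]
  ring

lemma ang_add_ang_add_ang (ha : 0 < a) (hb : 0 < b) (hc : 0 < c) :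
    ang a b c + ang b c a + ang c a b = π := by
  rw [ang_eq_two_mul_arctan ha hb hc, ang_eq_two_mul_arctan hb hc ha,
    ang_eq_two_mul_arctan hc ha hb, inradius_rotate, inradius_rotate (a := b), inradius_rotate]
  have hr := inradius_pos ha hb hc
  have := arctan_add_arctan_add_arctan (div_pos hr ha) (div_pos hr hb) (div_pos hr hc) (by
    field_simp
    rw [inradius_sq ha hb hc]
    field_simp
    ring)
  linarith

lemma ang_lt_ang_of_lt {b' : ℝ} (ha : 0 < a) (hb : 0 < b) (hc : 0 < c) (h : b < b') :
    ang a b c < ang a b' c := by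
  rw [ang_eq_two_mul_arctan ha hb hc, ang_eq_two_mul_arctan ha (hb.trans h) hc]
  have := arctan_strictMono (div_lt_div_of_pos_right (inradius_lt_inradius ha hb hc h) ha)
  linarith

lemma ang_le_ang {b' c' : ℝ} (ha : 0 < a) (hb : 0 < b) (hc : 0 < c) (hbb : b ≤ b')
    (hcc : c ≤ c') : ang a b c ≤ ang a b' c' := by
  calc ang a b c ≤ ang a b' c := by
        rcases hbb.lt_or_eq with h | rfl
        · exact (ang_lt_ang_of_lt ha hb hc h).le
        · rfl
    _ ≤ ang a b' c' := by
        rw [← ang_comm, ← ang_comm (c := c')]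
        rcases hcc.lt_or_eq with h | rfl
        · exact (ang_lt_ang_of_lt ha hc (hb.trans_le hbb) h).le
        · rfl

lemma hasDerivAt_ang {A B C : ℝ → ℝ} {A' B' C' t : ℝ} (hA : HasDerivAt A A' t)
    (hB : HasDerivAt B B' t) (hC : HasDerivAt C C' t) (hA0 : 0 < A t) (hB0 : 0 < B t)
    (hC0 : 0 < C t) :
    HasDerivAt (fun s => ang (A s) (B s) (C s))
      (inradius (A t) (B t) (C t) / (A t + B t) * (B' / B t - A' / A t) +
        inradius (A t) (B t) (C t) / (A t + C t) * (C' / C t - A' / A t)) t := by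
  have hS : A t + B t + C t ≠ 0 := by positivity
  have hP := ((hA.mul hB).mul hC).div ((hA.add hB).add hC) hS
  have hR := hP.sqrt (show A t * B t * C t / (A t + B t + C t) ≠ 0 by positivity)
  have hT := ((hR.div hA hA0.ne').arctan).const_mul 2
  have hev : ∀ᶠ s in 𝓝 t, 0 < A s ∧ 0 < B s ∧ 0 < C s :=
    (hA.continuousAt.eventually (lt_mem_nhds hA0)).and
      ((hB.continuousAt.eventually (lt_mem_nhds hB0)).and
        (hC.continuousAt.eventually (lt_mem_nhds hC0)))
  refine (hT.congr_of_eventuallyEq ?_).congr_deriv ?_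
  · filter_upwards [hev] with s ⟨ha, hb, hc⟩
    exact ang_eq_two_mul_arctan ha hb hc
  · simp only [Pi.mul_apply, Pi.add_apply, Pi.div_apply]
    rw [show √(A t * B t * C t / (A t + B t + C t)) = inradius (A t) (B t) (C t) from rfl]
    clear hP hR hT hev
    have hr := inradius_pos hA0 hB0 hC0
    have hr2 := inradius_sq hA0 hB0 hC0
    generalize inradius (A t) (B t) (C t) = r at hr hr2 ⊢
    generalize A t = a at *
    generalize B t = b at *
    generalize C t = c at *
    field_simp
    rw [hr2]
    field_simp
    ring

/-- Around a circle of a Doyle spiral the six triangles are, up to scaling, the triangles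
`1, e^p, e^q` and `1, e^q, e^(q-p)`, each contributing its three angles once. -/
lemma ang_doyle_sum (p q : ℝ) :
    ang 1 (exp p) (exp q) + ang 1 (exp q) (exp (q - p)) + ang 1 (exp (q - p)) (exp (-p)) +
      ang 1 (exp (-p)) (exp (-q)) + ang 1 (exp (-q)) (exp (p - q)) +
      ang 1 (exp (p - q)) (exp p) = 2 * π := by
  have up := ang_add_ang_add_ang (exp_pos 0) (exp_pos p) (exp_pos q)
  have down := ang_add_ang_add_ang (exp_pos 0) (exp_pos q) (exp_pos (q - p))
  simp only [ang_exp_eq_ang_one, sub_zero, zero_sub, sub_sub_cancel_left, neg_sub,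
    sub_sub_cancel] at up down
  linarith

end Triangle

/-- The neighbours of `m + n e^{iπ/3}` in the hexagonal lattice, counterclockwise. -/
def hexDir : Fin 6 → ℤ × ℤ := ![(1, 0), (0, 1), (-1, 1), (-1, 0), (0, -1), (1, -1)]

/-- Multiplication by `e^{iπ/3}` in the coordinates `m + n e^{iπ/3}`. -/
def hexRot (x : ℤ × ℤ) : ℤ × ℤ := (-x.2, x.1 + x.2)

lemma hexDir_add_three (i : Fin 6) : hexDir (i + 3) = -hexDir i := by
  fin_cases i <;> rfl

lemma hexRot_hexDir (i : Fin 6) : hexRot (hexDir i) = hexDir (i + 1) := by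
  fin_cases i <;> rfl

lemma hexDir_add_hexRot_neg (i : Fin 6) : hexDir i + hexRot (-hexDir i) = hexDir (i - 1) := by
  fin_cases i <;> rfl

def angleSum (r : ℤ × ℤ → ℝ) (v : ℤ × ℤ) : ℝ :=
  ∑ i : Fin 6, ang (r v) (r (v + hexDir i)) (r (v + hexDir (i + 1)))

lemma packingEq_iff_angleSum (r : ℤ × ℤ → ℝ) (m n : ℤ) :
    packingEq r m n ↔ angleSum r (m, n) = 2 * π := by
  simp [packingEq, angleSum, Fin.sum_univ_six, hexDir, sub_eq_add_neg]

lemma angleSum_comp_add_right (r : ℤ × ℤ → ℝ) (v x : ℤ × ℤ) :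
    angleSum (fun w => r (w + x)) v = angleSum r (v + x) := by
  simp only [angleSum, add_right_comm _ x]

lemma angleSum_doyle (a p q : ℝ) (v : ℤ × ℤ) :
    angleSum (fun w => exp (a + p * w.1 + q * w.2)) v = 2 * π := by
  have hstep (i : Fin 6) :
      p * (hexDir i).1 + q * (hexDir i).2 = ![p, q, q - p, -p, -q, p - q] i := by
    fin_cases i <;> simp [hexDir] <;> ring
  calc angleSum (fun w => exp (a + p * w.1 + q * w.2)) v
      = ∑ i : Fin 6, ang 1 (exp (![p, q, q - p, -p, -q, p - q] i))
          (exp (![p, q, q - p, -p, -q, p - q] (i + 1))) := by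
        refine Finset.sum_congr rfl fun i _ => ?_
        rw [ang_exp_eq_ang_one, ← hstep, ← hstep]
        congr 2 <;> push_cast [Prod.fst_add, Prod.snd_add] <;> ring
    _ = 2 * π := by
        simp only [Fin.sum_univ_six]
        exact ang_doyle_sum p q

lemma angleSum_lt_angleSum {r r' : ℤ × ℤ → ℝ} (hr : ∀ w, 0 < r w) {v : ℤ × ℤ} (hv : r v = r' v)
    (hle : ∀ i, r (v + hexDir i) ≤ r' (v + hexDir i)) {j : Fin 6}
    (hlt : r (v + hexDir j) < r' (v + hexDir j)) : angleSum r v < angleSum r' v := by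
  refine Finset.sum_lt_sum (fun i _ => ?_) ⟨j, Finset.mem_univ j, ?_⟩
  · rw [← hv]
    exact ang_le_ang (hr v) (hr _) (hr _) (hle i) (hle (i + 1))
  · rw [← hv]
    exact (ang_lt_ang_of_lt (hr v) (hr _) (hr _) hlt).trans_le
      (ang_le_ang (hr v) ((hr _).trans hlt) (hr _) le_rfl (hle (j + 1)))

/-- The angle sum at `(0, n)` is strictly increasing in the radii of row `n - 1`. -/
lemma eq_of_angleSum_row_eq (k : ℝ) {φ ψ : ℤ → ℝ} {n : ℤ}
    (hφ : angleSum (fun w => exp (k * w.1 + φ w.2)) (0, n) = 2 * π)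
    (hψ : angleSum (fun w => exp (k * w.1 + ψ w.2)) (0, n) = 2 * π)
    (h₀ : φ n = ψ n) (h₁ : φ (n + 1) = ψ (n + 1)) : φ (n - 1) = ψ (n - 1) := by
  wlog hle : φ (n - 1) ≤ ψ (n - 1) generalizing φ ψ
  · exact (this hψ hφ h₀.symm h₁.symm (le_of_not_ge hle)).symm
  refine hle.eq_of_not_lt fun hlt => (angleSum_lt_angleSum (fun _ => exp_pos _) ?_ (fun i => ?_)
    (j := 4) ?_).ne (hφ.trans hψ.symm)
  · simp [h₀]
  · fin_cases i <;> simp [hexDir, h₀, h₁, ← sub_eq_add_neg, hle]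
  · simpa [hexDir, ← sub_eq_add_neg] using hlt

/-- The third vertices of the two triangles on the edge `pq` are `p + hexRot (q - p)` and
`q + hexRot (p - q)`; by `hasDerivAt_ang`, `inradius / (r p + r q)` is the derivative of the
angle at `p` in `log (r q)`, and also that of the angle at `q` in `log (r p)`. -/
def conductance (r : ℤ × ℤ → ℝ) (p q : ℤ × ℤ) : ℝ :=
  (inradius (r p) (r q) (r (p + hexRot (q - p))) + inradius (r p) (r q) (r (q + hexRot (p - q))))
    / (r p + r q)

def hexLaplacian (c : ℤ × ℤ → ℤ × ℤ → ℝ) (f : ℤ × ℤ → ℝ) (v : ℤ × ℤ) : ℝ :=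
  ∑ i : Fin 6, c v (v + hexDir i) * (f (v + hexDir i) - f v)

lemma hexLaplacian_add_const (c : ℤ × ℤ → ℤ × ℤ → ℝ) (f : ℤ × ℤ → ℝ) (a : ℝ) (v : ℤ × ℤ) :
    hexLaplacian c (fun w => f w + a) v = hexLaplacian c f v := by
  simp [hexLaplacian]

lemma conductance_comm (r : ℤ × ℤ → ℝ) (p q : ℤ × ℤ) :
    conductance r p q = conductance r q p := by
  rw [conductance, conductance, add_comm (r q), add_comm (inradius (r q) _ _)]
  simp only [inradius_swap_left (a := r p) (b := r q)]

lemma conductance_add_hexDir (r : ℤ × ℤ → ℝ) (v : ℤ × ℤ) (i : Fin 6) :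
    conductance r v (v + hexDir i) =
      (inradius (r v) (r (v + hexDir i)) (r (v + hexDir (i + 1))) +
        inradius (r v) (r (v + hexDir (i - 1))) (r (v + hexDir i))) /
        (r v + r (v + hexDir i)) := by
  rw [conductance, add_sub_cancel_left, hexRot_hexDir, sub_add_cancel_left, add_assoc,
    hexDir_add_hexRot_neg, inradius_swap_right (b := r (v + hexDir (i - 1)))]

lemma conductance_pos {r : ℤ × ℤ → ℝ} (hr : ∀ w, 0 < r w) (p q : ℤ × ℤ) :
    0 < conductance r p q := by
  have := inradius_pos (hr p) (hr q) (hr (p + hexRot (q - p)))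
  have := inradius_pos (hr p) (hr q) (hr (q + hexRot (p - q)))
  have := hr p
  have := hr q
  unfold conductance
  positivity

lemma conductance_le_one {r : ℤ × ℤ → ℝ} (hr : ∀ w, 0 < r w) (p q : ℤ × ℤ) :
    conductance r p q ≤ 1 := by
  have := two_mul_inradius_le (hr p) (hr q) (hr (p + hexRot (q - p)))
  have := two_mul_inradius_le (hr p) (hr q) (hr (q + hexRot (p - q)))
  rw [conductance, div_le_one (add_pos (hr p) (hr q))]
  linarith

lemma continuous_conductance (u g : ℤ × ℤ → ℝ) (p q : ℤ × ℤ) :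
    Continuous fun t : ℝ => conductance (fun w => exp (u w + t * g w)) p q := by
  unfold conductance inradius
  fun_prop (disch := intro; positivity)

lemma hasDerivAt_angleSum (u g : ℤ × ℤ → ℝ) (v : ℤ × ℤ) (t : ℝ) :
    HasDerivAt (fun s => angleSum (fun w => exp (u w + s * g w)) v)
      (hexLaplacian (conductance fun w => exp (u w + t * g w)) g v) t := by
  have hexp (w : ℤ × ℤ) :
      HasDerivAt (fun s => exp (u w + s * g w)) (exp (u w + t * g w) * g w) t :=
    ((hasDerivAt_mul_const (g w)).const_add (u w)).exp
  refine (HasDerivAt.fun_sum fun i _ => hasDerivAt_ang (hexp v) (hexp _) (hexp _) (exp_pos _)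
    (exp_pos _) (exp_pos _)).congr_deriv ?_
  simp only [mul_div_cancel_left₀ _ (exp_ne_zero _), hexLaplacian, conductance_add_hexDir,
    add_div, add_mul, Finset.sum_add_distrib]
  congr 1
  exact (Equiv.subRight (1 : Fin 6)).sum_comp _ |>.symm.trans (by simp)

def segmentConductance (u u' : ℤ × ℤ → ℝ) (p q : ℤ × ℤ) : ℝ :=
  ∫ t in (0 : ℝ)..1, conductance (fun w => exp (u w + t * (u' - u) w)) p q

lemma segmentConductance_comm (u u' : ℤ × ℤ → ℝ) (p q : ℤ × ℤ) :
    segmentConductance u u' p q = segmentConductance u u' q p := by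
  simp only [segmentConductance, conductance_comm _ p q]

lemma segmentConductance_pos (u u' : ℤ × ℤ → ℝ) (p q : ℤ × ℤ) :
    0 < segmentConductance u u' p q :=
  intervalIntegral.intervalIntegral_pos_of_pos_on
    ((continuous_conductance u _ p q).intervalIntegrable 0 1)
    (fun _ _ => conductance_pos (fun _ => exp_pos _) p q) zero_lt_one

lemma segmentConductance_le_one (u u' : ℤ × ℤ → ℝ) (p q : ℤ × ℤ) :
    segmentConductance u u' p q ≤ 1 := by
  have := intervalIntegral.integral_mono_on (μ := MeasureTheory.volume) zero_le_one
    ((continuous_conductance u (u' - u) p q).intervalIntegrable 0 1) intervalIntegrable_const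
    (fun t _ => conductance_le_one (fun _ => exp_pos _) p q)
  exact this.trans_eq (by simp)

lemma hexLaplacian_segmentConductance_sub (u u' : ℤ × ℤ → ℝ) (v : ℤ × ℤ)
    (h : angleSum (fun w => exp (u w)) v = angleSum (fun w => exp (u' w)) v) :
    hexLaplacian (segmentConductance u u') (u' - u) v = 0 := by
  have hint (i : Fin 6) : IntervalIntegrable
      (fun t => conductance (fun w => exp (u w + t * (u' - u) w)) v (v + hexDir i) *
        ((u' - u) (v + hexDir i) - (u' - u) v)) MeasureTheory.volume 0 1 :=
    ((continuous_conductance u _ _ _).mul continuous_const).intervalIntegrable 0 1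
  have hcont : Continuous fun t =>
      hexLaplacian (conductance fun w => exp (u w + t * (u' - u) w)) (u' - u) v :=
    continuous_finsetSum _ fun i _ => (continuous_conductance _ _ _ _).mul continuous_const
  have hftc := intervalIntegral.integral_eq_sub_of_hasDerivAt
    (fun t _ => hasDerivAt_angleSum u (u' - u) v t) (hcont.intervalIntegrable 0 1)
  simp only [hexLaplacian, intervalIntegral.integral_finsetSum fun i _ => hint i,
    intervalIntegral.integral_mul_const] at hftc
  rw [hexLaplacian]
  simp only [segmentConductance]
  rw [hftc]
  simp [h]

def supNorm (v : ℤ × ℤ) : ℕ := max v.1.natAbs v.2.natAbs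

def box (N : ℕ) : Finset (ℤ × ℤ) := Finset.Icc (-(N : ℤ)) N ×ˢ Finset.Icc (-(N : ℤ)) N

lemma mem_box {N : ℕ} {v : ℤ × ℤ} : v ∈ box N ↔ supNorm v ≤ N := by
  simp only [box, Finset.mem_product, Finset.mem_Icc, supNorm]
  omega

lemma supNorm_add_le (v w : ℤ × ℤ) : supNorm (v + w) ≤ supNorm v + supNorm w := by
  simp only [supNorm, Prod.fst_add, Prod.snd_add]
  omega

lemma supNorm_neg (v : ℤ × ℤ) : supNorm (-v) = supNorm v := by
  simp [supNorm]

lemma supNorm_hexDir (i : Fin 6) : supNorm (hexDir i) = 1 := by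
  fin_cases i <;> rfl

lemma supNorm_le_supNorm_add_hexDir (v : ℤ × ℤ) (i : Fin 6) :
    supNorm v ≤ supNorm (v + hexDir i) + 1 := by
  simpa [supNorm_neg, supNorm_hexDir] using supNorm_add_le (v + hexDir i) (-hexDir i)

lemma supNorm_add_hexDir_le (v : ℤ × ℤ) (i : Fin 6) : supNorm (v + hexDir i) ≤ supNorm v + 1 :=
  (supNorm_add_le v _).trans_eq (by rw [supNorm_hexDir])

lemma card_box (N : ℕ) : (box N).card = (2 * N + 1) ^ 2 := by
  rw [box, Finset.card_product, Int.card_Icc, sq]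
  congr 1 <;> omega

/-- The shell `supNorm v = r + 1` has `(2r + 3)² - (2r + 1)² = 8 (r + 1)` points. -/
lemma sum_box_supNorm (g : ℕ → ℝ) (N : ℕ) :
    ∑ v ∈ box N, g (supNorm v) = g 0 + ∑ r ∈ Finset.range N, 8 * (r + 1) * g (r + 1) := by
  induction N with
  | zero =>
    simp [box, supNorm]
  | succ N ih =>
    have hsub : box N ⊆ box (N + 1) := fun v hv => mem_box.2 (by have := mem_box.1 hv; omega)
    have hshell : ∀ v ∈ box (N + 1) \ box N, g (supNorm v) = g (N + 1) := by
      intro v hv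
      rw [Finset.mem_sdiff, mem_box, mem_box] at hv
      rw [show supNorm v = N + 1 by omega]
    rw [← Finset.sum_sdiff hsub, Finset.sum_congr rfl hshell, Finset.sum_const,
      Finset.card_sdiff_of_subset hsub, card_box, card_box, ih, Finset.sum_range_succ,
      nsmul_eq_mul, Nat.cast_sub (by gcongr; omega)]
    push_cast
    ring

lemma sum_box_add_hexDir {N : ℕ} (F : ℤ × ℤ → ℝ) (hF : ∀ w, N ≤ supNorm w → F w = 0)
    (i : Fin 6) : ∑ v ∈ box N, F (v + hexDir i) = ∑ v ∈ box N, F v := by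
  have hsupp (G : ℤ × ℤ → ℝ) (hG : ∀ w, G w ≠ 0 → supNorm w ≤ N) :
      Function.support G ⊆ ↑(box N) := fun w hw => mem_box.2 (hG w hw)
  rw [← finsum_eq_finsetSum_of_support_subset _ (hsupp _ fun w hw => ?_),
    ← finsum_eq_finsetSum_of_support_subset _ (hsupp _ fun w hw => ?_)]
  · exact finsum_comp_equiv (Equiv.addRight (hexDir i))
  · by_contra! h
    exact hw (hF w h.le)
  · have := supNorm_le_supNorm_add_hexDir w i
    by_contra! h
    exact hw (hF _ (by omega))

section Green

variable {c : ℤ × ℤ → ℤ × ℤ → ℝ} {N : ℕ}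

lemma sum_box_green (hc : ∀ p q, c p q = c q p) (f : ℤ × ℤ → ℝ) {φ : ℤ × ℤ → ℝ}
    (hφ : ∀ w, N ≤ supNorm w → φ w = 0) :
    ∑ v ∈ box N, ∑ i, c v (v + hexDir i) * (f (v + hexDir i) - f v) * (φ (v + hexDir i) - φ v)
      = -2 * ∑ v ∈ box N, φ v * hexLaplacian c f v := by
  have hshift (i : Fin 6) :
      ∑ v ∈ box N, c v (v + hexDir i) * (f (v + hexDir i) - f v) * φ (v + hexDir i) =
        ∑ v ∈ box N, -(φ v * (c v (v + hexDir (i + 3)) * (f (v + hexDir (i + 3)) - f v))) := by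
    refine Eq.trans (Finset.sum_congr rfl fun v _ => ?_) (sum_box_add_hexDir _ (fun w hw => ?_) i)
    · rw [hexDir_add_three, add_neg_cancel_right, hc v]
      ring
    · simp [hφ w hw]
  have hrot (v : ℤ × ℤ) :
      ∑ i : Fin 6, c v (v + hexDir (i + 3)) * (f (v + hexDir (i + 3)) - f v) =
        hexLaplacian c f v :=
    Equiv.sum_comp (Equiv.addRight 3) fun i => c v (v + hexDir i) * (f (v + hexDir i) - f v)
  have hsplit (v : ℤ × ℤ) (i : Fin 6) :
      c v (v + hexDir i) * (f (v + hexDir i) - f v) * (φ (v + hexDir i) - φ v) =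
        c v (v + hexDir i) * (f (v + hexDir i) - f v) * φ (v + hexDir i) -
          φ v * (c v (v + hexDir i) * (f (v + hexDir i) - f v)) := by ring
  simp only [hsplit, Finset.sum_sub_distrib, ← Finset.mul_sum]
  rw [Finset.sum_comm, Finset.sum_congr rfl fun i _ => hshift i, Finset.sum_comm]
  simp only [Finset.sum_neg_distrib, ← Finset.mul_sum, hrot, hexLaplacian]
  ring

/-- Ground state transform: by `sum_box_green` the two energies differ by
`-2 ∑ (ψ² / h) Δh ≥ 0`. -/
lemma sum_box_energy_div_le (hc : ∀ p q, c p q = c q p) {h ψ : ℤ × ℤ → ℝ}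
    (hh : ∀ v, 0 < h v) (hsuper : ∀ v, hexLaplacian c h v ≤ 0)
    (hψ : ∀ w, N ≤ supNorm w → ψ w = 0) :
    ∑ v ∈ box N, ∑ i, c v (v + hexDir i) *
        (h v * h (v + hexDir i) * (ψ (v + hexDir i) / h (v + hexDir i) - ψ v / h v) ^ 2) ≤
      ∑ v ∈ box N, ∑ i, c v (v + hexDir i) * (ψ (v + hexDir i) - ψ v) ^ 2 := by
  have hpt (v w : ℤ × ℤ) (x : ℝ) : x * (h v * h w * (ψ w / h w - ψ v / h v) ^ 2) =
      x * (ψ w - ψ v) ^ 2 - x * (h w - h v) * (ψ w ^ 2 / h w - ψ v ^ 2 / h v) := by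
    field_simp [(hh v).ne', (hh w).ne']
    ring
  simp only [hpt, Finset.sum_sub_distrib]
  rw [sum_box_green hc h (φ := fun w => ψ w ^ 2 / h w) fun w hw => by simp [hψ w hw]]
  have : ∑ v ∈ box N, ψ v ^ 2 / h v * hexLaplacian c h v ≤ 0 :=
    Finset.sum_nonpos fun v _ =>
      mul_nonpos_of_nonneg_of_nonpos (div_nonneg (sq_nonneg _) (hh v).le) (hsuper v)
  linarith

end Green

lemma harmonic_le_harmonic {a b : ℕ} (h : a ≤ b) : harmonic a ≤ harmonic b :=
  Finset.sum_le_sum_of_subset_of_nonneg (Finset.range_subset_range.2 h) fun _ _ _ => by positivity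

lemma tendsto_harmonic_atTop : Tendsto (fun n => (harmonic n : ℝ)) atTop atTop :=
  tendsto_atTop_mono log_add_one_le_harmonic <|
    tendsto_log_atTop.comp <| tendsto_natCast_atTop_atTop.comp <| tendsto_add_atTop_nat 1

lemma abs_harmonic_sub_harmonic_le {a b : ℕ} (h₁ : a ≤ b + 1) (h₂ : b ≤ a + 1) :
    |(harmonic a : ℝ) - harmonic b| ≤ 2 / (b + 1) := by
  rcases (by omega : a = b ∨ a = b + 1 ∨ b = a + 1) with rfl | rfl | rfl
  · simp only [sub_self, abs_zero]
    positivity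
  · rw [harmonic_succ]
    push_cast
    rw [add_sub_cancel_left, abs_of_pos (by positivity), inv_eq_one_div]
    gcongr
    norm_num
  · rw [harmonic_succ]
    push_cast
    rw [sub_add_cancel_left, abs_neg, abs_of_pos (by positivity), inv_eq_one_div,
      div_le_div_iff₀ (by positivity) (by positivity)]
    linarith

lemma sum_box_inv_supNorm_add_one_sq_le (N : ℕ) :
    ∑ v ∈ box N, 1 / ((supNorm v : ℝ) + 1) ^ 2 ≤ 1 + 8 * (harmonic N : ℝ) := by
  rw [sum_box_supNorm (fun r => 1 / ((r : ℝ) + 1) ^ 2), harmonic, Rat.cast_sum, Finset.mul_sum]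
  push_cast
  norm_num only
  gcongr 1 + ?_
  refine Finset.sum_le_sum fun r _ => ?_
  rw [mul_one_div, ← div_eq_mul_inv, div_le_div_iff₀ (by positivity) (by positivity)]
  nlinarith

/-- The profile `(H N - H r) / (H N - H K)` in the harmonic numbers `H`, clamped to `[0, 1]`,
has energy `O(1 / H N)`: this is the recurrence of the planar lattice. -/
lemma exists_cutoff (K : ℕ) {ε : ℝ} (hε : 0 < ε) :
    ∃ N : ℕ, ∃ ψ : ℤ × ℤ → ℝ, (∀ v, supNorm v ≤ K → ψ v = 1) ∧
      (∀ v, N ≤ supNorm v → ψ v = 0) ∧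
      ∑ v ∈ box N, ∑ i, (ψ (v + hexDir i) - ψ v) ^ 2 ≤ ε := by
  obtain ⟨N, hN⟩ := (tendsto_harmonic_atTop.eventually_ge_atTop
    (max (2 * harmonic K) (max 1 (864 / ε)))).exists
  simp only [max_le_iff] at hN
  obtain ⟨hNK, hN1, hNε⟩ := hN
  set D : ℝ := harmonic N - harmonic K with hD_def
  have hD : (harmonic N : ℝ) / 2 ≤ D := by linarith
  have hD0 : 0 < D := by linarith
  clear_value D
  set x : ℤ × ℤ → ℝ := fun v => (harmonic N - harmonic (supNorm v)) / D
  refine ⟨N, fun v => Set.projIcc 0 1 zero_le_one (x v), fun v hv => ?_, fun v hv => ?_, ?_⟩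
  · have : (harmonic (supNorm v) : ℝ) ≤ harmonic K := by exact_mod_cast harmonic_le_harmonic hv
    have hx : 1 ≤ x v := (le_div_iff₀ hD0).2 (by linarith)
    simp only [Set.projIcc_of_right_le _ hx]
  · have : (harmonic N : ℝ) ≤ harmonic (supNorm v) := by exact_mod_cast harmonic_le_harmonic hv
    have hx : x v ≤ 0 := div_nonpos_of_nonpos_of_nonneg (by linarith) hD0.le
    simp only [Set.projIcc_of_le_left _ hx]
  have hstep (v : ℤ × ℤ) (i : Fin 6) :
      ((Set.projIcc 0 1 zero_le_one (x (v + hexDir i)) : ℝ) -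
        Set.projIcc 0 1 zero_le_one (x v)) ^ 2 ≤ (2 / (supNorm v + 1) / D) ^ 2 := by
    rw [← sq_abs]
    refine pow_le_pow_left₀ (abs_nonneg _) ((Set.abs_projIcc_sub_projIcc _).trans ?_) 2
    rw [← sub_div, abs_div, abs_of_pos hD0, sub_sub_sub_cancel_left, abs_sub_comm]
    gcongr
    exact abs_harmonic_sub_harmonic_le (supNorm_add_hexDir_le v i)
      (supNorm_le_supNorm_add_hexDir v i)
  calc _ ≤ ∑ v ∈ box N, ∑ i : Fin 6, (2 / (supNorm v + 1) / D) ^ 2 :=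
        Finset.sum_le_sum fun v _ => Finset.sum_le_sum fun i _ => hstep v i
    _ = 24 / D ^ 2 * ∑ v ∈ box N, 1 / ((supNorm v : ℝ) + 1) ^ 2 := by
        simp only [Finset.sum_const, Finset.card_univ, Fintype.card_fin, nsmul_eq_mul,
          Finset.mul_sum]
        refine Finset.sum_congr rfl fun v _ => ?_
        generalize (supNorm v : ℝ) + 1 = s
        ring
    _ ≤ 24 / ((harmonic N : ℝ) / 2) ^ 2 * (9 * harmonic N) := by
        gcongr
        linarith [sum_box_inv_supNorm_add_one_sq_le N]
    _ = 864 / harmonic N := by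
        field_simp
        norm_num
    _ ≤ ε := by
        rw [div_le_iff₀ (by linarith)]
        rw [div_le_iff₀ hε] at hNε
        linarith

/-- Liouville: testing `sum_box_energy_div_le` with the cutoffs of `exists_cutoff` bounds the
edge term `c v w · h v h w (1 / h w - 1 / h v)²` by every `ε > 0`. -/
theorem eq_of_hexLaplacian_nonpos {c : ℤ × ℤ → ℤ × ℤ → ℝ} {C : ℝ} (hc : ∀ p q, c p q = c q p)
    (hc0 : ∀ v i, 0 < c v (v + hexDir i)) (hcC : ∀ v i, c v (v + hexDir i) ≤ C)
    {h : ℤ × ℤ → ℝ} (hh : ∀ v, 0 < h v) (hsuper : ∀ v, hexLaplacian c h v ≤ 0)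
    (v : ℤ × ℤ) (i : Fin 6) : h (v + hexDir i) = h v := by
  set w := v + hexDir i
  have hC : 0 < C := (hc0 v i).trans_le (hcC v i)
  have hterm (ψ : ℤ × ℤ → ℝ) (v : ℤ × ℤ) (i : Fin 6) : 0 ≤ c v (v + hexDir i) *
      (h v * h (v + hexDir i) * (ψ (v + hexDir i) / h (v + hexDir i) - ψ v / h v) ^ 2) := by
    have := hc0 v i
    have := hh v
    have := hh (v + hexDir i)
    positivity
  have hX : c v w * (h v * h w * (1 / h w - 1 / h v) ^ 2) ≤ 0 := by
    refine le_of_forall_gt_imp_ge_of_dense fun ε hε => ?_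
    obtain ⟨N, ψ, hψ1, hψ0, hE⟩ := exists_cutoff (supNorm v + 1) (div_pos hε hC)
    have hvN : v ∈ box N := mem_box.2 <| by
      by_contra! hN
      have := hψ0 v hN.le
      rw [hψ1 v (by omega)] at this
      exact one_ne_zero this
    calc c v w * (h v * h w * (1 / h w - 1 / h v) ^ 2)
        = c v w * (h v * h w * (ψ w / h w - ψ v / h v) ^ 2) := by
          rw [hψ1 v (by omega), hψ1 w (by have := supNorm_add_hexDir_le v i; omega)]
      _ ≤ ∑ v ∈ box N, ∑ i, c v (v + hexDir i) *
            (h v * h (v + hexDir i) * (ψ (v + hexDir i) / h (v + hexDir i) - ψ v / h v) ^ 2) :=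
          (Finset.single_le_sum (fun j _ => hterm ψ v j) (Finset.mem_univ i)).trans
            (Finset.single_le_sum (fun u _ => Finset.sum_nonneg fun j _ => hterm ψ u j) hvN)
      _ ≤ ∑ v ∈ box N, ∑ i, c v (v + hexDir i) * (ψ (v + hexDir i) - ψ v) ^ 2 :=
          sum_box_energy_div_le hc hh hsuper hψ0
      _ ≤ ∑ v ∈ box N, ∑ i, C * (ψ (v + hexDir i) - ψ v) ^ 2 := by
          gcongr with u _ j
          exact hcC u j
      _ ≤ C * (ε / C) := by
          simp only [← Finset.mul_sum]
          gcongr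
      _ = ε := mul_div_cancel₀ ε hC.ne'
  have := hc0 v i
  have := hh v
  have := hh w
  have hsq : (1 / h w - 1 / h v) ^ 2 = 0 :=
    le_antisymm (nonpos_of_mul_nonpos_right (nonpos_of_mul_nonpos_right hX (by positivity))
      (by positivity)) (sq_nonneg _)
  rwa [sq_eq_zero_iff, sub_eq_zero, one_div, one_div, inv_inj] at hsq

lemma eq_add_mul_of_sub_eq {f : ℤ → ℝ} {k : ℝ} (h : ∀ n, f (n + 1) - f n = k) (n : ℤ) :
    f n = f 0 + k * n := by
  have hper : Function.Periodic (fun n : ℤ => f n - k * n) 1 := fun n => by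
    push_cast
    linarith [h n]
  have := hper.int_mul_eq n
  simp only [Int.cast_id, mul_one, Int.cast_zero, mul_zero, sub_zero] at this
  linarith

lemma eq_of_forall_add_hexDir_eq {f : ℤ × ℤ → ℝ} (hf : ∀ v i, f (v + hexDir i) = f v)
    (v : ℤ × ℤ) : f v = f 0 := by
  have h₁ (m n : ℤ) : f (m + 1, n) - f (m, n) = 0 :=
    sub_eq_zero.2 (by simpa [hexDir] using hf (m, n) 0)
  have h₂ (n : ℤ) : f (0, n + 1) - f (0, n) = 0 :=
    sub_eq_zero.2 (by simpa [hexDir] using hf (0, n) 1)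
  rw [← Prod.mk.eta (p := v), eq_add_mul_of_sub_eq (f := fun m => f (m, v.2)) (h₁ · v.2) v.1,
    eq_add_mul_of_sub_eq (f := fun n => f (0, n)) h₂ v.2]
  simp [Prod.zero_eq_mk]

lemma exists_sub_eq_of_forall_le (u : ℤ × ℤ → ℝ)
    (hpack : ∀ v, angleSum (fun w => exp (u w)) v = 2 * π) {c₀ : ℝ}
    (hbelow : ∀ v, c₀ ≤ u (v + (1, 0)) - u v) : ∃ k, ∀ v, u (v + (1, 0)) - u v = k := by
  set u' : ℤ × ℤ → ℝ := fun w => u (w + (1, 0))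
  have hconst := eq_of_hexLaplacian_nonpos (segmentConductance_comm u u')
    (fun v i => segmentConductance_pos u u' v _) (fun v i => segmentConductance_le_one u u' v _)
    (h := fun w => (u' - u) w + (1 - c₀))
    (fun v => by simp only [Pi.sub_apply]; linarith [hbelow v])
    (fun v => by
      rw [hexLaplacian_add_const, hexLaplacian_segmentConductance_sub _ _ _ <| by
        rw [hpack, angleSum_comp_add_right (fun w => exp (u w)), hpack]])
  refine ⟨u' 0 - u 0, fun v => ?_⟩
  have := eq_of_forall_add_hexDir_eq (f := fun w => (u' - u) w + (1 - c₀)) hconst v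
  simp only [Pi.sub_apply, add_left_inj] at this
  exact this

lemma sub_eq_of_angleSum_row {k : ℝ} {φ : ℤ → ℝ}
    (hφ : ∀ n, angleSum (fun w => exp (k * w.1 + φ w.2)) (0, n) = 2 * π) (n : ℤ) :
    φ (n + 1) - φ n = φ 1 - φ 0 := by
  have hsecond (n : ℤ) : φ (n + 1) - φ n = φ n - φ (n - 1) := by
    obtain ⟨t, ht⟩ : ∃ t, φ (n + 1) - φ n = t := ⟨_, rfl⟩
    have hspiral : angleSum (fun w => exp (k * w.1 + (φ n + t * (w.2 - n)))) (0, n) = 2 * π := by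
      rw [← angleSum_doyle (φ n - t * n) k t (0, n)]
      congr 2 with w
      congr 1
      ring
    have := eq_of_angleSum_row_eq k (ψ := fun m => φ n + t * (m - n)) (hφ n) hspiral (by simp)
      (by push_cast; linarith)
    push_cast at this
    linarith
  refine eq_add_mul_of_sub_eq (f := fun n => φ (n + 1) - φ n) (k := 0) (fun n => ?_) n |>.trans ?_
  · rw [hsecond (n + 1), add_sub_cancel_right, sub_self]
  · simp

end CirclePacking

end

open CirclePacking

/-- Main rigidity theorem: if the discrete conformal factors `u` of a locally univalent
circle packing of the hexagonal lattice satisfy `inf D1 u > -∞`, then both difference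
operators of `u` are constant, i.e. the radii are `r_{0,0}·e^{k1 m}·e^{k2 n}` and the
packing is a regular hexagonal packing or a Doyle spiral. -/
theorem stmt_18 (u : ℤ × ℤ → ℝ)
    (hpack : ∀ m n : ℤ, packingEq (fun v => Real.exp (u v)) m n)
    (hbelow : ∃ c : ℝ, ∀ m n : ℤ, c ≤ u (m + 1, n) - u (m, n)) :
    ∃ k1 k2 : ℝ, (∀ m n : ℤ, u (m + 1, n) - u (m, n) = k1) ∧
      (∀ m n : ℤ, u (m, n + 1) - u (m, n) = k2) ∧
      ∀ m n : ℤ, Real.exp (u (m, n)) =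
        Real.exp (u (0, 0)) * Real.exp (k1 * m) * Real.exp (k2 * n) := by
  obtain ⟨c₀, hc₀⟩ := hbelow
  have hsum (v : ℤ × ℤ) : angleSum (fun w => exp (u w)) v = 2 * π :=
    (packingEq_iff_angleSum _ v.1 v.2).1 (hpack v.1 v.2)
  obtain ⟨k1, hk1⟩ := exists_sub_eq_of_forall_le u hsum fun ⟨m, n⟩ => by simpa using hc₀ m n
  have hD1 (m n : ℤ) : u (m + 1, n) - u (m, n) = k1 := by simpa using hk1 (m, n)
  have hrow (m n : ℤ) : u (m, n) = k1 * m + u (0, n) := by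
    rw [eq_add_mul_of_sub_eq (f := fun m => u (m, n)) (hD1 · n) m]
    ring
  have hD2 := sub_eq_of_angleSum_row (k := k1) (φ := fun n => u (0, n)) fun n => by
    rw [← hsum (0, n)]
    congr 2 with w
    rw [hrow w.1 w.2]
  refine ⟨k1, u (0, 1) - u (0, 0), hD1, fun m n => ?_, fun m n => ?_⟩
  · rw [hrow m, hrow m n, ← hD2 n]
    ring
  · rw [← exp_add, ← exp_add, hrow, eq_add_mul_of_sub_eq (f := fun n => u (0, n)) hD2 n]
    ring_nf
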